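/- arXiv:1408.4214 — 2 statements merged into one kernel-verified Lean document; each statement's English description precedes it below -/
import Mathlib

section
/- For every $\rho > 0$ there exists a constant $C_2 > 0$ such that for every triangle $T \subseteq \mathbb{R}^2$ with diameter $h$ that contains a ball of radius $\rho h$, every edge $e$ of $T$, and every function $v : \mathbb{R}^2 \to \mathbb{R}$ that is continuously differentiable on an open neighborhood of $T$, one has $\int_e v^2 \, d\mathcal{H}^1 \le C_2 \left( h^{-1} \int_T v^2 \, dx + h \int_T \lVert \nabla v \rVert^2 \, dx \right)$. -/
open MeasureTheory Set
open AffineMap (lineMap)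
open scoped ENNReal

/-!
Let `p` be the vertex opposite to the edge `[a, b]` and `h = diam T`. For a point `x` of the edge
and `φ(t) = v(p + t (x - p))`, integrating the derivative of `t² φ(t)²` over `[0, 1]` gives
`φ(1)² ≤ ∫₀¹ t (3 φ² + φ'²) dt`, hence `v(x)² ≤ ∫₀¹ t F(p + t (x - p)) dt` with
`F = 3 v² + h² ‖∇v‖²`. Integrating over the edge and changing variables by
`(s, t) ↦ p + t (a - p + s (b - a))`, whose Jacobian is `t D` with `|D| = 2 |T|`, gives
`|D| ∫ₑ v² ≤ h ∫_T F`. Finally the inscribed ball yields `π ρ² h² ≤ |T| ≤ |D|`.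
-/

section Segment
variable {E : Type*} [NormedAddCommGroup E] [NormedSpace ℝ E] [MeasurableSpace E] [BorelSpace E]

theorem measurableEmbedding_lineMap {a b : E} (hab : a ≠ b) :
    MeasurableEmbedding (lineMap a b : ℝ → E) :=
  ((antilipschitzWith_lineMap hab).isClosedEmbedding
    (lipschitzWith_lineMap a b).uniformContinuous).measurableEmbedding

theorem lintegral_segment {a b : E} (hab : a ≠ b) (f : E → ℝ≥0∞) :
    ∫⁻ x in segment ℝ a b, f x ∂μH[1]
      = nndist a b * ∫⁻ s in Icc (0 : ℝ) 1, f (lineMap a b s) := by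
  have hmeas : μH[1].restrict (segment ℝ a b)
      = (nndist a b : ℝ≥0∞) • (volume.restrict (Icc (0 : ℝ) 1)).map (lineMap a b) := by
    ext X hX
    rw [Measure.restrict_apply hX, Measure.smul_apply,
      (measurableEmbedding_lineMap hab).map_apply, Measure.restrict_apply' measurableSet_Icc,
      segment_eq_image_lineMap, inter_comm, ← image_inter_preimage, inter_comm,
      hausdorffMeasure_lineMap_image, hausdorffMeasure_real, ENNReal.smul_def, smul_eq_mul]
  rw [hmeas, lintegral_smul_measure, (measurableEmbedding_lineMap hab).lintegral_map,
    smul_eq_mul]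
end Segment

theorem sq_le_lintegral_of_abs_deriv_le {φ φ' G : ℝ → ℝ} (hφ : ContinuousOn φ (Icc 0 1))
    (hφ' : ∀ t ∈ Ioo (0 : ℝ) 1, HasDerivAt φ (φ' t) t) (hG : ContinuousOn G (Icc 0 1))
    (hφ'G : ∀ t ∈ Ioo (0 : ℝ) 1, |φ' t| ≤ G t) :
    ENNReal.ofReal (φ 1 ^ 2)
      ≤ ∫⁻ t in Ioc 0 1, ENNReal.ofReal (t * (3 * φ t ^ 2 + G t ^ 2)) := by
  have hint : IntegrableOn (fun t => t * (3 * φ t ^ 2 + G t ^ 2)) (Icc 0 1) :=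
    (continuousOn_id.mul ((continuousOn_const.mul (hφ.pow 2)).add (hG.pow 2))).integrableOn_Icc
  have hFTC : φ 1 ^ 2 ≤ ∫ t in Ioc 0 1, t * (3 * φ t ^ 2 + G t ^ 2) := by
    have := intervalIntegral.sub_le_integral_of_hasDeriv_right_of_le zero_le_one
      (g := fun t => t ^ 2 * φ t ^ 2) (φ := fun t => t * (3 * φ t ^ 2 + G t ^ 2))
      ((continuousOn_id.pow 2).mul (hφ.pow 2))
      (fun t ht => (((hasDerivAt_pow 2 t).mul ((hφ' t ht).pow 2))).hasDerivWithinAt) hint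
      (fun t ⟨ht0, ht1⟩ => by
        have hφ'G := abs_le.1 (hφ'G t ⟨ht0, ht1⟩)
        have hφ'2 : φ' t ^ 2 ≤ G t ^ 2 := sq_le_sq' hφ'G.1 hφ'G.2
        simp only [Pi.pow_apply, Nat.cast_ofNat, pow_one, Nat.add_one_sub_one]
        nlinarith [mul_nonneg (sq_nonneg t) (sq_nonneg (φ t - φ' t)),
          mul_nonneg (sq_nonneg t) (sub_nonneg.2 hφ'2),
          mul_nonneg (mul_pos ht0 (sub_pos.2 ht1)).le
            (add_nonneg (sq_nonneg (φ t)) (sq_nonneg (G t)))])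
    simpa [intervalIntegral.integral_of_le zero_le_one] using this
  calc ENNReal.ofReal (φ 1 ^ 2)
      ≤ ENNReal.ofReal (∫ t in Ioc 0 1, t * (3 * φ t ^ 2 + G t ^ 2)) :=
        ENNReal.ofReal_le_ofReal hFTC
    _ = _ := ofReal_integral_eq_lintegral_ofReal (hint.mono_set Ioc_subset_Icc_self)
        ((ae_restrict_iff' measurableSet_Ioc).2 (ae_of_all _ fun t ht => by
          have := ht.1; positivity))

section Ray
variable {E : Type*} [NormedAddCommGroup E] [InnerProductSpace ℝ E] [CompleteSpace E]

noncomputable def energyDensity (v : E → ℝ) (h : ℝ) (y : E) : ℝ :=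
  3 * v y ^ 2 + h ^ 2 * ‖gradient v y‖ ^ 2

theorem energyDensity_nonneg (v : E → ℝ) (h : ℝ) (y : E) : 0 ≤ energyDensity v h y := by
  unfold energyDensity; positivity

theorem ContDiffOn.continuousOn_gradient {v : E → ℝ} {U : Set E} (hU : IsOpen U)
    (hv : ContDiffOn ℝ 1 v U) : ContinuousOn (gradient v) U := by
  rw [show gradient v = (InnerProductSpace.toDual ℝ E).symm ∘ fderiv ℝ v from
    funext fun y => rfl]
  exact (InnerProductSpace.toDual ℝ E).symm.continuous.comp_continuousOn
    (hv.continuousOn_fderiv_of_isOpen hU le_rfl)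

theorem ContDiffOn.continuousOn_energyDensity {v : E → ℝ} {U : Set E} (hU : IsOpen U)
    (hv : ContDiffOn ℝ 1 v U) (h : ℝ) : ContinuousOn (energyDensity v h) U :=
  (continuousOn_const.mul (hv.continuousOn.pow 2)).add
    (continuousOn_const.mul ((hv.continuousOn_gradient hU).norm.pow 2))

theorem sq_le_lintegral_energyDensity_lineMap {v : E → ℝ} {U : Set E} (hU : IsOpen U)
    (hv : ContDiffOn ℝ 1 v U) {p x : E} (hpx : segment ℝ p x ⊆ U) {h : ℝ}
    (hh : dist x p ≤ h) :
    ENNReal.ofReal (v x ^ 2)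
      ≤ ∫⁻ t in Ioc 0 1, ENNReal.ofReal (t * energyDensity v h (lineMap p x t)) := by
  have hmaps : MapsTo (lineMap p x) (Icc (0 : ℝ) 1) U := fun t ht =>
    hpx (segment_eq_image_lineMap ℝ p x ▸ mem_image_of_mem _ ht)
  have hderiv : ∀ t ∈ Ioo (0 : ℝ) 1, HasDerivAt (fun t => v (lineMap p x t))
      (fderiv ℝ v (lineMap p x t) (x - p)) t := fun t ht =>
    ((hv.differentiableOn one_ne_zero _ (hmaps (Ioo_subset_Icc_self ht))).differentiableAt
      (hU.mem_nhds (hmaps (Ioo_subset_Icc_self ht)))).hasFDerivAt.comp_hasDerivAt t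
      AffineMap.hasDerivAt_lineMap
  have hbound : ∀ t ∈ Ioo (0 : ℝ) 1, |fderiv ℝ v (lineMap p x t) (x - p)|
      ≤ h * ‖gradient v (lineMap p x t)‖ := fun t _ => by
    rw [← inner_gradient_left, mul_comm h]
    exact (abs_real_inner_le_norm _ _).trans
      (mul_le_mul_of_nonneg_left ((dist_eq_norm x p).symm.trans_le hh) (norm_nonneg _))
  have := sq_le_lintegral_of_abs_deriv_le
    (hv.continuousOn.comp AffineMap.lineMap_continuous.continuousOn hmaps) hderiv
    (continuousOn_const.mul
      ((hv.continuousOn_gradient hU).norm.comp AffineMap.lineMap_continuous.continuousOn hmaps))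
    hbound
  simpa [energyDensity, mul_pow] using this
end Ray

local notation "ℝ²" => EuclideanSpace ℝ (Fin 2)

noncomputable section

namespace Plane

def prodEquiv : ℝ × ℝ ≃ᵐ ℝ² :=
  MeasurableEquiv.finTwoArrow.symm.trans (MeasurableEquiv.toLp 2 (Fin 2 → ℝ))

theorem measurePreserving_prodEquiv : MeasurePreserving prodEquiv volume volume :=
  ((EuclideanSpace.volume_preserving_symm_measurableEquiv_toLp (Fin 2)).symm _).comp
    ((volume_preserving_finTwoArrow ℝ).symm _)

@[simp] theorem prodEquiv_apply_zero (q : ℝ × ℝ) : prodEquiv q 0 = q.1 := rfl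
@[simp] theorem prodEquiv_apply_one (q : ℝ × ℝ) : prodEquiv q 1 = q.2 := rfl

def box (s t : Set ℝ) : Set ℝ² := {x | x 0 ∈ s ∧ x 1 ∈ t}

theorem box_mono {s s' t t' : Set ℝ} (hs : s ⊆ s') (ht : t ⊆ t') : box s t ⊆ box s' t' :=
  fun _ hx => ⟨hs hx.1, ht hx.2⟩

theorem preimage_prodEquiv_box (s t : Set ℝ) : prodEquiv ⁻¹' box s t = s ×ˢ t := rfl

theorem measurableSet_box {s t : Set ℝ} (hs : MeasurableSet s) (ht : MeasurableSet t) :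
    MeasurableSet (box s t) :=
  (hs.preimage (measurable_pi_apply 0 |>.comp (WithLp.measurable_ofLp 2 _))).inter
    (ht.preimage (measurable_pi_apply 1 |>.comp (WithLp.measurable_ofLp 2 _)))

theorem volume_box (s t : Set ℝ) : volume (box s t) = volume s * volume t := by
  rw [← measurePreserving_prodEquiv.measure_preimage_equiv, preimage_prodEquiv_box,
    Measure.volume_eq_prod, Measure.prod_prod]

theorem setLIntegral_box {s t : Set ℝ} (hs : MeasurableSet s) (ht : MeasurableSet t)
    {f : ℝ² → ℝ≥0∞} (hf : AEMeasurable f (volume.restrict (box s t))) :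
    ∫⁻ x in box s t, f x = ∫⁻ a in s, ∫⁻ b in t, f (prodEquiv (a, b)) := by
  have hmp := measurePreserving_prodEquiv.restrict_preimage (measurableSet_box hs ht)
  rw [preimage_prodEquiv_box, Measure.volume_eq_prod] at hmp
  rw [← measurePreserving_prodEquiv.setLIntegral_comp_preimage_emb
      prodEquiv.measurableEmbedding, preimage_prodEquiv_box, Measure.volume_eq_prod]
  exact setLIntegral_prod (f ∘ prodEquiv)
    (hf.comp_quasiMeasurePreserving hmp.quasiMeasurePreserving)

def frame (u c : ℝ²) : ℝ² →L[ℝ] ℝ² :=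
  (EuclideanSpace.proj 0).smulRight u + (EuclideanSpace.proj 1).smulRight c

@[simp] theorem frame_apply (u c x : ℝ²) : frame u c x = x 0 • u + x 1 • c := rfl

theorem det_frame (u c : ℝ²) : (frame u c).det = u 0 * c 1 - u 1 * c 0 := by
  rw [ContinuousLinearMap.det,
    ← LinearMap.det_toMatrix (EuclideanSpace.basisFun (Fin 2) ℝ).toBasis, Matrix.det_fin_two]
  simp [LinearMap.toMatrix_apply, mul_comm]

theorem frame_injective {u c : ℝ²} (h : (frame u c).det ≠ 0) :
    Function.Injective (frame u c) :=
  (Module.End.isUnit_iff _).1 ((LinearMap.isUnit_iff_isUnit_det _).2 (isUnit_iff_ne_zero.2 h)) |>.1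

def rayMap (p a b : ℝ²) (x : ℝ²) : ℝ² := lineMap p (lineMap a b (x 0)) (x 1)

theorem rayMap_eq (p a b x : ℝ²) : rayMap p a b x = p + x 1 • (a - p + x 0 • (b - a)) := by
  simp only [rayMap, AffineMap.lineMap_apply_module']
  module

theorem hasFDerivAt_rayMap (p a b x : ℝ²) :
    HasFDerivAt (rayMap p a b) (frame (x 1 • (b - a)) (a - p + x 0 • (b - a))) x := by
  have hcoord (i : Fin 2) :
      HasFDerivAt (fun y : ℝ² => y i) (EuclideanSpace.proj (𝕜 := ℝ) i) x :=
    (EuclideanSpace.proj (𝕜 := ℝ) i).hasFDerivAt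
  have := ((hcoord 1).smul (((hcoord 0).smul_const (b - a)).const_add (a - p))).const_add p
  rw [funext (rayMap_eq p a b)]
  refine this.congr_fderiv (ContinuousLinearMap.ext fun y => ?_)
  simp only [add_apply, smul_apply, ContinuousLinearMap.smulRight_apply, PiLp.proj_apply,
    frame_apply]
  module

theorem det_fderiv_rayMap (p a b x : ℝ²) :
    (frame (x 1 • (b - a)) (a - p + x 0 • (b - a))).det
      = x 1 * (frame (b - a) (a - p)).det := by
  simp only [det_frame, PiLp.add_apply, PiLp.smul_apply, smul_eq_mul]
  ring

theorem rayMap_eq_frame (p a b x : ℝ²) :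
    rayMap p a b x = p + frame (b - a) (a - p) (prodEquiv (x 0 * x 1, x 1)) := by
  rw [rayMap_eq, frame_apply, prodEquiv_apply_zero, prodEquiv_apply_one]
  module

theorem injOn_rayMap {p a b : ℝ²} (hD : (frame (b - a) (a - p)).det ≠ 0) :
    InjOn (rayMap p a b) (box (Icc 0 1) (Ioc 0 1)) := by
  intro x hx y hy hxy
  rw [rayMap_eq_frame, rayMap_eq_frame, add_right_inj] at hxy
  obtain ⟨h0, h1⟩ := Prod.mk.inj (prodEquiv.injective (frame_injective hD hxy))
  have h0' : x 0 = y 0 := mul_right_cancel₀ hx.2.1.ne' (by rw [h0, h1])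
  ext i
  fin_cases i
  exacts [h0', h1]

theorem lintegral_image_rayMap {p a b : ℝ²} (hD : (frame (b - a) (a - p)).det ≠ 0)
    (f : ℝ² → ℝ≥0∞) :
    ∫⁻ y in rayMap p a b '' box (Icc 0 1) (Ioc 0 1), f y
      = ENNReal.ofReal |(frame (b - a) (a - p)).det|
          * ∫⁻ x in box (Icc 0 1) (Ioc 0 1), ENNReal.ofReal (x 1) * f (rayMap p a b x) := by
  have hS : MeasurableSet (box (Icc (0 : ℝ) 1) (Ioc 0 1)) :=
    measurableSet_box measurableSet_Icc measurableSet_Ioc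
  rw [lintegral_image_eq_lintegral_abs_det_fderiv_mul volume hS
    (fun x _ => (hasFDerivAt_rayMap p a b x).hasFDerivWithinAt) (injOn_rayMap hD),
    ← lintegral_const_mul' _ _ ENNReal.ofReal_ne_top]
  refine setLIntegral_congr_fun hS fun x hx => ?_
  rw [det_fderiv_rayMap, abs_mul, abs_of_pos hx.2.1, ← mul_assoc,
    ENNReal.ofReal_mul hx.2.1.le, mul_comm (ENNReal.ofReal (x 1))]

theorem rayMap_mem_convexHull (p a b : ℝ²) {x : ℝ²} (hx : x ∈ box (Icc 0 1) (Icc 0 1)) :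
    rayMap p a b x ∈ convexHull ℝ {p, a, b} :=
  (convex_convexHull ℝ _).lineMap_mem (subset_convexHull ℝ _ (by simp))
    ((convex_convexHull ℝ _).lineMap_mem (subset_convexHull ℝ _ (by simp))
      (subset_convexHull ℝ _ (by simp)) hx.1) hx.2

theorem volume_convexHull_le (p a b : ℝ²) :
    volume (convexHull ℝ {p, a, b}) ≤ ENNReal.ofReal |(frame (b - a) (a - p)).det| := by
  set L := frame (b - a) (a - p)
  have hbox : Convex ℝ (box (Icc (0 : ℝ) 1) (Icc 0 1)) :=
    ((convex_Icc 0 1).linear_preimage (EuclideanSpace.proj (𝕜 := ℝ) 0).toLinearMap).inter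
      ((convex_Icc 0 1).linear_preimage (EuclideanSpace.proj (𝕜 := ℝ) 1).toLinearMap)
  have hsub : convexHull ℝ {p, a, b} ⊆ (p + ·) '' (L '' box (Icc 0 1) (Icc 0 1)) := by
    refine convexHull_min ?_ ((hbox.linear_image L.toLinearMap).translate p)
    rintro y (rfl | rfl | rfl)
    · exact ⟨0, ⟨0, by simp [box], map_zero L⟩, add_zero y⟩
    · refine ⟨_, ⟨prodEquiv (0, 1), by simp [box], rfl⟩, ?_⟩
      simp [L]
    · refine ⟨_, ⟨prodEquiv (1, 1), by simp [box], rfl⟩, ?_⟩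
      simp [L]
  calc volume (convexHull ℝ {p, a, b})
      ≤ volume ((p + ·) '' (L '' box (Icc 0 1) (Icc 0 1))) := measure_mono hsub
    _ = ENNReal.ofReal |L.det| := by
      simp [Measure.addHaar_image_continuousLinearMap, volume_box]

end Plane

end

open Plane

theorem lintegral_segment_sq_le_lintegral_rays {p a b : ℝ²} (hab : a ≠ b) {U : Set ℝ²}
    (hU : IsOpen U) (hTU : convexHull ℝ {p, a, b} ⊆ U) {v : ℝ² → ℝ}
    (hv : ContDiffOn ℝ 1 v U) :
    ∫⁻ x in segment ℝ a b, ENNReal.ofReal (v x ^ 2) ∂μH[1]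
      ≤ ENNReal.ofReal (Metric.diam (convexHull ℝ {p, a, b}))
        * ∫⁻ x in box (Icc 0 1) (Ioc 0 1), ENNReal.ofReal
            (x 1 * energyDensity v (Metric.diam (convexHull ℝ {p, a, b})) (rayMap p a b x)) := by
  set T := convexHull ℝ {p, a, b}
  set F := energyDensity v (Metric.diam T)
  have hT : Convex ℝ T := convex_convexHull ℝ _
  have hTb : Bornology.IsBounded T := (Set.toFinite _).isCompact_convexHull ℝ |>.isBounded
  have hpT : p ∈ T := subset_convexHull ℝ _ (by simp)
  have haT : a ∈ T := subset_convexHull ℝ _ (by simp)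
  have hbT : b ∈ T := subset_convexHull ℝ _ (by simp)
  have hray : ∀ s ∈ Icc (0 : ℝ) 1, ENNReal.ofReal (v (lineMap a b s) ^ 2)
      ≤ ∫⁻ t in Ioc 0 1, ENNReal.ofReal (t * F (rayMap p a b (prodEquiv (s, t)))) :=
    fun s hs =>
      have hsT := hT.lineMap_mem haT hbT hs
      sq_le_lintegral_energyDensity_lineMap hU hv ((hT.segment_subset hpT hsT).trans hTU)
        (Metric.dist_le_diam_of_mem hTb hsT hpT)
  have hmeas : AEMeasurable (fun x => ENNReal.ofReal (x 1 * F (rayMap p a b x)))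
      (volume.restrict (box (Icc 0 1) (Ioc 0 1))) := by
    refine (ContinuousOn.aemeasurable ?_ (measurableSet_box measurableSet_Icc
      measurableSet_Icc)).mono_measure (Measure.restrict_mono
        (box_mono subset_rfl Ioc_subset_Icc_self) le_rfl)
    refine ENNReal.continuous_ofReal.comp_continuousOn
      ((by fun_prop : Continuous fun x : ℝ² => x 1).continuousOn.mul ?_)
    exact (hv.continuousOn_energyDensity hU _).comp (by unfold rayMap; fun_prop)
      fun x hx => hTU (rayMap_mem_convexHull p a b hx)
  have hnd : (nndist a b : ℝ≥0∞) ≤ ENNReal.ofReal (Metric.diam T) := by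
    rw [← edist_nndist, edist_dist]
    exact ENNReal.ofReal_le_ofReal (Metric.dist_le_diam_of_mem hTb haT hbT)
  rw [lintegral_segment hab, setLIntegral_box measurableSet_Icc measurableSet_Ioc hmeas]
  exact mul_le_mul' hnd (setLIntegral_mono' measurableSet_Icc hray)

theorem lintegral_segment_sq_le {p a b : ℝ²} (hab : a ≠ b)
    (hD : (frame (b - a) (a - p)).det ≠ 0) {U : Set ℝ²} (hU : IsOpen U)
    (hTU : convexHull ℝ {p, a, b} ⊆ U) {v : ℝ² → ℝ} (hv : ContDiffOn ℝ 1 v U) :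
    ENNReal.ofReal |(frame (b - a) (a - p)).det|
        * ∫⁻ x in segment ℝ a b, ENNReal.ofReal (v x ^ 2) ∂μH[1]
      ≤ ENNReal.ofReal (Metric.diam (convexHull ℝ {p, a, b}))
        * ∫⁻ y in convexHull ℝ {p, a, b},
            ENNReal.ofReal (energyDensity v (Metric.diam (convexHull ℝ {p, a, b})) y) := by
  set T := convexHull ℝ {p, a, b}
  set h := Metric.diam T
  set D := (frame (b - a) (a - p)).det
  set S := box (Icc (0 : ℝ) 1) (Ioc 0 1)
  calc ENNReal.ofReal |D| * ∫⁻ x in segment ℝ a b, ENNReal.ofReal (v x ^ 2) ∂μH[1]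
      ≤ ENNReal.ofReal |D| * (ENNReal.ofReal h
          * ∫⁻ x in S, ENNReal.ofReal (x 1 * energyDensity v h (rayMap p a b x))) :=
        mul_le_mul_right (lintegral_segment_sq_le_lintegral_rays hab hU hTU hv) _
    _ = ENNReal.ofReal h * ∫⁻ y in rayMap p a b '' S, ENNReal.ofReal (energyDensity v h y) := by
        rw [lintegral_image_rayMap hD, mul_left_comm]
        congr 2
        exact lintegral_congr fun x => ENNReal.ofReal_mul' (energyDensity_nonneg v h _)
    _ ≤ ENNReal.ofReal h * ∫⁻ y in T, ENNReal.ofReal (energyDensity v h y) := by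
        gcongr
        exact image_subset_iff.2 fun x hx =>
          rayMap_mem_convexHull p a b (box_mono subset_rfl Ioc_subset_Icc_self hx)

theorem mul_integral_segment_sq_le {p a b : ℝ²} (hab : a ≠ b)
    (hD : (frame (b - a) (a - p)).det ≠ 0) {U : Set ℝ²} (hU : IsOpen U)
    (hTU : convexHull ℝ {p, a, b} ⊆ U) {v : ℝ² → ℝ} (hv : ContDiffOn ℝ 1 v U) :
    |(frame (b - a) (a - p)).det| * ∫ x in segment ℝ a b, v x ^ 2 ∂μH[1]
      ≤ Metric.diam (convexHull ℝ {p, a, b})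
        * ∫ y in convexHull ℝ {p, a, b},
            energyDensity v (Metric.diam (convexHull ℝ {p, a, b})) y := by
  set T := convexHull ℝ {p, a, b}
  have hTc : IsCompact T := (Set.toFinite _).isCompact_convexHull ℝ
  have hseg : IsCompact (segment ℝ a b) :=
    segment_eq_image_lineMap ℝ a b ▸ isCompact_Icc.image AffineMap.lineMap_continuous
  have hsegU : segment ℝ a b ⊆ U := ((convex_convexHull ℝ _).segment_subset
    (subset_convexHull ℝ _ (by simp)) (subset_convexHull ℝ _ (by simp))).trans hTU
  have hFint : IntegrableOn (energyDensity v (Metric.diam T)) T :=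
    ((hv.continuousOn_energyDensity hU _).mono hTU).integrableOn_compact hTc
  have := ENNReal.toReal_mono
    (ENNReal.mul_ne_top ENNReal.ofReal_ne_top hFint.lintegral_lt_top.ne)
    (lintegral_segment_sq_le hab hD hU hTU hv)
  rwa [ENNReal.toReal_mul, ENNReal.toReal_mul, ENNReal.toReal_ofReal (abs_nonneg _),
    ENNReal.toReal_ofReal Metric.diam_nonneg,
    ← integral_eq_lintegral_of_nonneg_ae (ae_of_all _ fun x => sq_nonneg _)
      ((hv.continuousOn.mono hsegU).pow 2 |>.aestronglyMeasurable hseg.measurableSet),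
    ← integral_eq_lintegral_of_nonneg_ae (ae_of_all _ (energyDensity_nonneg v _))
      hFint.aestronglyMeasurable] at this

theorem pi_mul_sq_le_abs_det {p a b z : ℝ²} {r : ℝ} (hr : 0 ≤ r)
    (hball : Metric.closedBall z r ⊆ convexHull ℝ {p, a, b}) :
    Real.pi * r ^ 2 ≤ |(frame (b - a) (a - p)).det| := by
  have := (measure_mono hball).trans (volume_convexHull_le p a b)
  rwa [EuclideanSpace.volume_closedBall_fin_two, ← ENNReal.ofReal_pow hr,
    ← ENNReal.ofReal_mul (by positivity), ENNReal.ofReal_le_ofReal_iff (abs_nonneg _),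
    mul_comm] at this

theorem integral_segment_sq_le {ρ : ℝ} (hρ : 0 < ρ) {p a b : ℝ²} (hab : a ≠ b)
    (hball : ∃ z, Metric.closedBall z (ρ * Metric.diam (convexHull ℝ {p, a, b}))
      ⊆ convexHull ℝ {p, a, b})
    {U : Set ℝ²} (hU : IsOpen U) (hTU : convexHull ℝ {p, a, b} ⊆ U) {v : ℝ² → ℝ}
    (hv : ContDiffOn ℝ 1 v U) :
    ∫ x in segment ℝ a b, v x ^ 2 ∂μH[1]
      ≤ 3 / (Real.pi * ρ ^ 2) * ((Metric.diam (convexHull ℝ {p, a, b}))⁻¹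
          * (∫ x in convexHull ℝ {p, a, b}, v x ^ 2)
        + Metric.diam (convexHull ℝ {p, a, b})
          * ∫ x in convexHull ℝ {p, a, b}, ‖gradient v x‖ ^ 2) := by
  set T := convexHull ℝ {p, a, b}
  set h := Metric.diam T
  set X := ∫ x in T, v x ^ 2
  set Y := ∫ x in T, ‖gradient v x‖ ^ 2
  set I := ∫ x in segment ℝ a b, v x ^ 2 ∂μH[1]
  have hTc : IsCompact T := (Set.toFinite _).isCompact_convexHull ℝ
  have hh : 0 < h := (dist_pos.2 hab).trans_le (Metric.dist_le_diam_of_mem hTc.isBounded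
    (subset_convexHull ℝ _ (by simp)) (subset_convexHull ℝ _ (by simp)))
  obtain ⟨z, hz⟩ := hball
  have harea := pi_mul_sq_le_abs_det (by positivity) hz
  have hD : (frame (b - a) (a - p)).det ≠ 0 := abs_pos.1 (lt_of_lt_of_le (by positivity) harea)
  have hXint : IntegrableOn (fun x => v x ^ 2) T :=
    ((hv.continuousOn.mono hTU).pow 2).integrableOn_compact hTc
  have hYint : IntegrableOn (fun x => ‖gradient v x‖ ^ 2) T :=
    (((hv.continuousOn_gradient hU).mono hTU).norm.pow 2).integrableOn_compact hTc
  have hF : ∫ y in T, energyDensity v h y = 3 * X + h ^ 2 * Y := by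
    simp only [energyDensity]
    rw [integral_add (hXint.const_mul 3) (hYint.const_mul _), integral_const_mul,
      integral_const_mul]
  have key : Real.pi * (ρ * h) ^ 2 * I ≤ h * (3 * X + h ^ 2 * Y) :=
    hF ▸ (mul_le_mul_of_nonneg_right harea (integral_nonneg fun x => sq_nonneg (v x))).trans
      (mul_integral_segment_sq_le hab hD hU hTU hv)
  have key' : Real.pi * ρ ^ 2 * h * I ≤ 3 * X + h ^ 2 * Y :=
    le_of_mul_le_mul_left (by linarith [key]) hh
  have hY : 0 ≤ Y := integral_nonneg fun x => sq_nonneg _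
  rw [div_mul_eq_mul_div, le_div_iff₀ (by positivity)]
  field_simp
  nlinarith [mul_nonneg (sq_nonneg h) hY]

/-- Scaled trace inequality on an edge (Lemma 5.1, third estimate): for every
shape-regularity parameter `ρ > 0` there is a constant `C₂ > 0` such that for every
triangle `T` with affinely independent vertices `A 0, A 1, A 2`, of diameter `h`,
containing a closed ball of radius `ρ * h`, every edge `e = segment ℝ (A i) (A j)`
(`i ≠ j`) of `T`, and every function `v` continuously differentiable on an open
neighborhood of `T`,
`∫_e v² dℋ¹ ≤ C₂ (h⁻¹ ∫_T v² + h ∫_T ‖∇v‖²)`. -/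
theorem stmt_5 (ρ : ℝ) (hρ : 0 < ρ) :
    ∃ C₂ > (0 : ℝ),
      ∀ A : Fin 3 → EuclideanSpace ℝ (Fin 2),
        AffineIndependent ℝ A →
        ∀ T : Set (EuclideanSpace ℝ (Fin 2)), T = convexHull ℝ (Set.range A) →
        ∀ h : ℝ, h = Metric.diam T →
        (∃ z, Metric.closedBall z (ρ * h) ⊆ T) →
        ∀ i j : Fin 3, i ≠ j →
        ∀ v : EuclideanSpace ℝ (Fin 2) → ℝ,
          (∃ U : Set (EuclideanSpace ℝ (Fin 2)), IsOpen U ∧ T ⊆ U ∧ ContDiffOn ℝ 1 v U) →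
          (∫ x in segment ℝ (A i) (A j), (v x) ^ 2 ∂μH[1]) ≤
            C₂ * (h⁻¹ * (∫ x in T, (v x) ^ 2) + h * ∫ x in T, ‖gradient v x‖ ^ 2) := by
  refine ⟨3 / (Real.pi * ρ ^ 2), by positivity, ?_⟩
  rintro A hA T rfl h rfl hball i j hij v ⟨U, hU, hTU, hv⟩
  obtain ⟨k, hk⟩ : ∃ k, ∀ m : Fin 3, m = k ∨ m = i ∨ m = j := by
    revert i j; decide
  have hrange : Set.range A = {A k, A i, A j} := by
    ext x
    simp only [Set.mem_range, Set.mem_insert_iff, Set.mem_singleton_iff]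
    constructor
    · rintro ⟨m, rfl⟩
      rcases hk m with rfl | rfl | rfl <;> simp
    · rintro (rfl | rfl | rfl) <;> exact ⟨_, rfl⟩
  rw [hrange] at hball hTU ⊢
  exact integral_segment_sq_le hρ (hA.injective.ne hij) hball hU hTU hv
end

section
/- For every $\rho > 0$ there exists a constant $C > 0$ such that the following holds. Let $T$ be any triangle with vertices $A_1, A_2, A_3$, diameter $h$, containing a ball of radius $\rho h$; let $D = (1-s)A_1 + sA_2$ with $s \in (0,1)$ and $E = (1-r)A_1 + rA_3$ with $r \in (0,1)$; let the segment $\overline{DE}$ divide $T$ into $T^-$ (the subtriangle with vertex $A_1$) and $T^+$ (the part containing $A_2$ and $A_3$); let $n_{DE}$ be a unit vector orthogonal to $E - D$; let $\beta^+, \beta^- > 0$, set $\alpha = \max(\beta^+,\beta^-)/\min(\beta^+,\beta^-)$, and let $\beta : T \to \mathbb{R}$ equal $\beta^\pm$ on $T^\pm$. Let $v : T \to \mathbb{R}$ equal affine maps $p^\pm$ on $T^\pm$ with $p^+(D) = p^-(D)$, $p^+(E) = p^-(E)$, and $\beta^+ \langle \nabla p^+, n_{DE} \rangle = \beta^- \langle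 \nabla p^-, n_{DE} \rangle$. Then for every edge $e$ of $T$ with unit normal $n_e$: $h \int_e \beta \, \langle \nabla v, n_e \rangle^2 \, d\mathcal{H}^1 \le C \, \alpha \int_T \beta \, \lVert \nabla v \rVert^2 \, dx$, where $\nabla v$ equals $\nabla p^\pm$ on $T^\pm$. -/
open MeasureTheory RealInnerProductSpace

/-!
Since `v` is continuous at `D` and `E`, the gradient jump `gp - gm` is normal to the chord `DE`,
so `gp` and `gm` have the same tangential component, while the flux condition
`βp ⟪gp, n⟫ = βm ⟪gm, n⟫` bounds each normal component by `α` times the other. Hence the two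
energy densities `β± ‖g±‖²` agree up to the factor `α³`, and the edge integrand is pointwise at
most `α³` times the smaller one. The edge has length at most `h` and `T` contains a disc of area
`π ρ² h²`, which gives the theorem with `C = α² / (π ρ²)`.
-/

lemma le_max_div_min_mul {a b : ℝ} (ha : 0 < a) (hb : 0 < b) :
    a ≤ max a b / min a b * b := by
  have hmin : 0 < min a b := lt_min ha hb
  rw [div_mul_eq_mul_div, le_div_iff₀ hmin]
  exact mul_le_mul (le_max_left a b) (min_le_right a b) hmin.le (hb.le.trans (le_max_right a b))

lemma one_le_max_div_min {a b : ℝ} (ha : 0 < a) (hb : 0 < b) : 1 ≤ max a b / min a b :=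
  (one_le_div (lt_min ha hb)).2 min_le_max

section Affine

variable {V : Type*} [AddCommGroup V] [Module ℝ V]

lemma smul_add_smul_add_smul_mem_convexHull {x y z : V} {a b c : ℝ}
    (ha : 0 ≤ a) (hb : 0 ≤ b) (hc : 0 ≤ c) (habc : a + b + c = 1) :
    a • x + b • y + c • z ∈ convexHull ℝ {x, y, z} := by
  simpa [Fin.sum_univ_three] using (convex_convexHull ℝ ({x, y, z} : Set V)).sum_mem
    (t := Finset.univ) (w := ![a, b, c]) (z := ![x, y, z])
    (by intro i _; fin_cases i <;> simpa) (by simp [Fin.sum_univ_three, habc])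
    (by intro i _; fin_cases i <;> exact subset_convexHull ℝ _ (by simp))

lemma smul_add_smul_add_smul_add_smul_mem_convexHull {x y z w : V} {a b c d : ℝ}
    (ha : 0 ≤ a) (hb : 0 ≤ b) (hc : 0 ≤ c) (hd : 0 ≤ d) (habcd : a + b + c + d = 1) :
    a • x + b • y + c • z + d • w ∈ convexHull ℝ {x, y, z, w} := by
  simpa [Fin.sum_univ_four] using (convex_convexHull ℝ ({x, y, z, w} : Set V)).sum_mem
    (t := Finset.univ) (w := ![a, b, c, d]) (z := ![x, y, z, w])
    (by intro i _; fin_cases i <;> simpa) (by simp [Fin.sum_univ_four, habcd])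
    (by intro i _; fin_cases i <;> exact subset_convexHull ℝ _ (by simp))

lemma exists_smul_add_smul_add_smul_of_mem_convexHull {x y z p : V}
    (hp : p ∈ convexHull ℝ {x, y, z}) :
    ∃ a b c : ℝ, 0 ≤ a ∧ 0 ≤ b ∧ 0 ≤ c ∧ a + b + c = 1 ∧ p = a • x + b • y + c • z := by
  rw [convexHull_insert (Set.insert_nonempty y {z}), mem_convexJoin] at hp
  obtain ⟨_, rfl, q, hq, a, t, ha, ht, hat, rfl⟩ := hp
  rw [convexHull_pair] at hq
  obtain ⟨b, c, hb, hc, hbc, rfl⟩ := hq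
  refine ⟨a, t * b, t * c, ha, by positivity, by positivity, by linear_combination hat + t * hbc,
    by module⟩

lemma convexHull_subset_union_of_cut {A₁ A₂ A₃ D E : V} {s r : ℝ} (hs : 0 < s) (hr : 0 < r)
    (hD : D = (1 - s) • A₁ + s • A₂) (hE : E = (1 - r) • A₁ + r • A₃) :
    convexHull ℝ {A₁, A₂, A₃} ⊆ convexHull ℝ {A₁, D, E} ∪ convexHull ℝ {A₂, A₃, D, E} := by
  intro x hx
  obtain ⟨a, b, c, ha, hb, hc, habc, rfl⟩ := exists_smul_add_smul_add_smul_of_mem_convexHull hx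
  subst hD hE
  by_cases hcut : b / s + c / r ≤ 1
  · left
    convert smul_add_smul_add_smul_mem_convexHull (x := A₁) (y := (1 - s) • A₁ + s • A₂)
      (z := (1 - r) • A₁ + r • A₃) (sub_nonneg.2 hcut) (div_nonneg hb hs.le)
      (div_nonneg hc hr.le) (by ring) using 1
    match_scalars
    · field_simp
      linear_combination (s * r) * habc
    · field_simp
    · field_simp
  · right
    push Not at hcut
    -- `θ` makes the `A₁`-components of `θ (b / s) • D + θ (c / r) • E` add up to `a`.
    have hden : 0 < b / s + c / r - b - c := by linarith
    obtain ⟨θ, hθ₀, hθ₁, hθ⟩ : ∃ θ, 0 ≤ θ ∧ θ ≤ 1 ∧ θ * (b / s + c / r - b - c) = a :=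
      ⟨a / (b / s + c / r - b - c), div_nonneg ha hden.le, by rw [div_le_one hden]; linarith,
        div_mul_cancel₀ a hden.ne'⟩
    convert smul_add_smul_add_smul_add_smul_mem_convexHull (x := A₂) (y := A₃)
      (z := (1 - s) • A₁ + s • A₂) (w := (1 - r) • A₁ + r • A₃)
      (mul_nonneg (sub_nonneg.2 hθ₁) hb) (mul_nonneg (sub_nonneg.2 hθ₁) hc)
      (mul_nonneg hθ₀ (div_nonneg hb hs.le)) (mul_nonneg hθ₀ (div_nonneg hc hr.le))
      (by linear_combination hθ + habc) using 1
    match_scalars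
    · rw [← hθ]
      field_simp
      ring
    · field_simp
      ring
    · field_simp
      ring

lemma smul_add_smul_ne_of_affineIndependent {A₁ A₂ A₃ : V}
    (hA : AffineIndependent ℝ ![A₁, A₂, A₃]) {s r : ℝ} (hs : s ≠ 0) :
    (1 - r) • A₁ + r • A₃ ≠ (1 - s) • A₁ + s • A₂ := by
  intro hEq
  have hcomb : (s - r) • A₁ + (-s) • A₂ + r • A₃ = 0 := by
    rw [← sub_eq_zero.2 hEq]; module
  have := affineIndependent_iff.1 hA Finset.univ ![s - r, -s, r]
    (by simp [Fin.sum_univ_three]; ring) (by simpa [Fin.sum_univ_three] using hcomb) 1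
    (Finset.mem_univ _)
  exact hs (by simpa using this)

end Affine

section InnerProduct

variable {V : Type*} [NormedAddCommGroup V] [InnerProductSpace ℝ V] {n g₁ g₂ : V}

lemma inner_sq_le_norm_sq_of_norm_eq_one (hn : ‖n‖ = 1) (g : V) : ⟪g, n⟫ ^ 2 ≤ ‖g‖ ^ 2 := by
  simpa [hn] using sq_le_sq' (neg_le_of_abs_le (abs_real_inner_le_norm g n))
    (le_of_abs_le (abs_real_inner_le_norm g n))

lemma norm_mul_inner_sq_le_mul_norm_sq {b : ℝ} (hb : 0 ≤ b) (hn : ‖n‖ = 1) (g : V) :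
    ‖b * ⟪g, n⟫ ^ 2‖ ≤ b * ‖g‖ ^ 2 := by
  rw [Real.norm_of_nonneg (by positivity)]
  exact mul_le_mul_of_nonneg_left (inner_sq_le_norm_sq_of_norm_eq_one hn g) hb

lemma sub_mem_span_singleton_of_inner_add_eq [Fact (Module.finrank ℝ V = 2)] {D E : V}
    {c₁ c₂ : ℝ} (hDE : E - D ≠ 0) (hn : n ≠ 0) (hDEn : ⟪E - D, n⟫ = 0)
    (hD : ⟪g₁, D⟫ + c₁ = ⟪g₂, D⟫ + c₂) (hE : ⟪g₁, E⟫ + c₁ = ⟪g₂, E⟫ + c₂) :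
    g₁ - g₂ ∈ ℝ ∙ n := by
  refine Submodule.mem_span_singleton_of_inner_eq_zero_of_inner_eq_zero hDE hn ?_ hDEn
  simp only [inner_sub_right, real_inner_comm g₁, real_inner_comm g₂]
  linarith

lemma norm_sq_sub_inner_sq_eq_of_sub_mem_span (hn : ‖n‖ = 1) (h : g₁ - g₂ ∈ ℝ ∙ n) :
    ‖g₁‖ ^ 2 - ⟪g₁, n⟫ ^ 2 = ‖g₂‖ ^ 2 - ⟪g₂, n⟫ ^ 2 := by
  obtain ⟨c, hc⟩ := Submodule.mem_span_singleton.1 h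
  rw [show g₁ = g₂ + c • n by rw [hc]; abel, norm_add_sq_real, inner_add_left,
    real_inner_smul_left, real_inner_smul_right, norm_smul, real_inner_self_eq_norm_sq, hn]
  simp only [Real.norm_eq_abs, mul_one, one_pow]
  rw [sq_abs]
  ring

lemma norm_sq_le_of_sub_mem_span_of_flux_eq {β₁ β₂ : ℝ} (hn : ‖n‖ = 1) (hβ₁ : 0 < β₁)
    (hβ₂ : 0 < β₂) (hjump : g₁ - g₂ ∈ ℝ ∙ n) (hflux : β₁ * ⟪g₁, n⟫ = β₂ * ⟪g₂, n⟫) :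
    ‖g₁‖ ^ 2 ≤ (max β₁ β₂ / min β₁ β₂) ^ 2 * ‖g₂‖ ^ 2 := by
  set α := max β₁ β₂ / min β₁ β₂
  have hα : 1 ≤ α ^ 2 := one_le_pow₀ (one_le_max_div_min hβ₁ hβ₂)
  have hnormal : ⟪g₁, n⟫ ^ 2 ≤ α ^ 2 * ⟪g₂, n⟫ ^ 2 := by
    have hratio : β₂ / β₁ ≤ α := by
      rw [div_le_iff₀ hβ₁, show α = max β₂ β₁ / min β₂ β₁ by rw [max_comm, min_comm]]
      exact le_max_div_min_mul hβ₂ hβ₁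
    have : ⟪g₁, n⟫ = β₂ / β₁ * ⟪g₂, n⟫ := by field_simp; linarith
    rw [this, mul_pow]
    gcongr
  have htangential := norm_sq_sub_inner_sq_eq_of_sub_mem_span hn hjump
  have ht₀ := inner_sq_le_norm_sq_of_norm_eq_one hn g₂
  nlinarith

lemma mul_norm_sq_le_of_sub_mem_span_of_flux_eq {β₁ β₂ : ℝ} (hn : ‖n‖ = 1) (hβ₁ : 0 < β₁)
    (hβ₂ : 0 < β₂) (hjump : g₁ - g₂ ∈ ℝ ∙ n) (hflux : β₁ * ⟪g₁, n⟫ = β₂ * ⟪g₂, n⟫) :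
    β₁ * ‖g₁‖ ^ 2 ≤ (max β₁ β₂ / min β₁ β₂) ^ 3 * (β₂ * ‖g₂‖ ^ 2) := by
  calc β₁ * ‖g₁‖ ^ 2
      ≤ (max β₁ β₂ / min β₁ β₂ * β₂) * ((max β₁ β₂ / min β₁ β₂) ^ 2 * ‖g₂‖ ^ 2) :=
        mul_le_mul (le_max_div_min_mul hβ₁ hβ₂)
          (norm_sq_le_of_sub_mem_span_of_flux_eq hn hβ₁ hβ₂ hjump hflux) (by positivity)
          (by positivity)
    _ = _ := by ring

lemma max_mul_norm_sq_le_of_sub_mem_span_of_flux_eq {β₁ β₂ : ℝ} (hn : ‖n‖ = 1)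
    (hβ₁ : 0 < β₁) (hβ₂ : 0 < β₂) (hjump : g₁ - g₂ ∈ ℝ ∙ n)
    (hflux : β₁ * ⟪g₁, n⟫ = β₂ * ⟪g₂, n⟫) :
    max (β₁ * ‖g₁‖ ^ 2) (β₂ * ‖g₂‖ ^ 2) ≤
      (max β₁ β₂ / min β₁ β₂) ^ 3 * min (β₁ * ‖g₁‖ ^ 2) (β₂ * ‖g₂‖ ^ 2) := by
  have hα : 1 ≤ (max β₁ β₂ / min β₁ β₂) ^ 3 := one_le_pow₀ (one_le_max_div_min hβ₁ hβ₂)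
  have h₁₂ := mul_norm_sq_le_of_sub_mem_span_of_flux_eq hn hβ₁ hβ₂ hjump hflux
  have h₂₁ := mul_norm_sq_le_of_sub_mem_span_of_flux_eq hn hβ₂ hβ₁
    (by simpa using Submodule.neg_mem _ hjump) hflux.symm
  rw [max_comm β₂, min_comm β₂] at h₂₁
  rw [mul_min_of_nonneg _ _ (by positivity)]
  exact max_le (le_min (le_mul_of_one_le_left (by positivity) hα) h₁₂)
    (le_min h₂₁ (le_mul_of_one_le_left (by positivity) hα))

end InnerProduct

lemma Set.eqOn_piecewise_const_of_subset_union {X Y : Type*} {S S' T : Set X}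
    [DecidablePred (· ∈ S)] {φ : X → Y} {a b : Y} (hT : T ⊆ S ∪ S') (ha : ∀ x ∈ S, φ x = a)
    (hb : ∀ x ∈ S' \ S, φ x = b) : Set.EqOn φ (S.piecewise (fun _ ↦ a) (fun _ ↦ b)) T := by
  intro x hx
  by_cases hxS : x ∈ S
  · simp [hxS, ha x hxS]
  · simp [hxS, hb x ⟨(hT hx).resolve_left hxS, hxS⟩]

lemma setIntegral_segment_le_mul_dist {E : Type*} [NormedAddCommGroup E] [NormedSpace ℝ E]
    [MeasurableSpace E] [BorelSpace E] {P Q : E} {f : E → ℝ} {M : ℝ}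
    (hf : ∀ x ∈ segment ℝ P Q, ‖f x‖ ≤ M) :
    ∫ x in segment ℝ P Q, f x ∂μH[1] ≤ M * dist P Q := by
  have hbound := norm_setIntegral_le_of_norm_le_const
    (by simpa using edist_lt_top P Q) hf (μ := μH[1])
  rw [measureReal_def, hausdorffMeasure_segment, edist_dist,
    ENNReal.toReal_ofReal dist_nonneg] at hbound
  exact (Real.le_norm_self _).trans hbound

lemma pi_mul_sq_le_volume_real_of_closedBall_subset {T : Set (EuclideanSpace ℝ (Fin 2))}
    {z : EuclideanSpace ℝ (Fin 2)} {R : ℝ} (hR : 0 ≤ R) (hT : Metric.closedBall z R ⊆ T)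
    (hTfin : volume T ≠ ⊤) : Real.pi * R ^ 2 ≤ volume.real T := by
  calc Real.pi * R ^ 2 = volume.real (Metric.closedBall z R) := by
        rw [measureReal_def, EuclideanSpace.volume_closedBall_fin_two, ENNReal.toReal_mul,
          ENNReal.toReal_pow, ENNReal.toReal_ofReal hR, ENNReal.toReal_ofReal Real.pi_pos.le,
          mul_comm]
    _ ≤ volume.real T := measureReal_mono hT hTfin

lemma mul_measureReal_le_setIntegral_of_eqOn_piecewise {X : Type*} [MeasurableSpace X]
    {μ : Measure X} {S T : Set X} [DecidablePred (· ∈ S)] (hS : MeasurableSet S)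
    (hT : MeasurableSet T) (hμT : μ T ≠ ⊤) {f : X → ℝ} {a b c : ℝ}
    (hf : Set.EqOn f (S.piecewise (fun _ ↦ a) (fun _ ↦ b)) T) (ha : c ≤ a) (hb : c ≤ b) :
    c * μ.real T ≤ ∫ x in T, f x ∂μ := by
  have : IsFiniteMeasure (μ.restrict T) := isFiniteMeasure_restrict.2 hμT
  have hint : IntegrableOn (S.piecewise (fun _ ↦ a) (fun _ ↦ b)) T μ :=
    Integrable.piecewise hS (integrable_const a).integrableOn (integrable_const b).integrableOn
  refine setIntegral_ge_of_const_le_real hT hμT (fun x hx ↦ ?_) (hint.congr_fun hf.symm hT)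
  rw [hf hx]
  by_cases hxS : x ∈ S <;> simp [hxS, ha, hb]

lemma diam_mul_setIntegral_segment_le_of_closedBall_subset
    {T : Set (EuclideanSpace ℝ (Fin 2))} (hT : IsCompact T) {ρ : ℝ} (hρ : 0 < ρ)
    {z : EuclideanSpace ℝ (Fin 2)} (hz : Metric.closedBall z (ρ * Metric.diam T) ⊆ T)
    {P Q : EuclideanSpace ℝ (Fin 2)} (hPQ : segment ℝ P Q ⊆ T)
    {f F : EuclideanSpace ℝ (Fin 2) → ℝ} {K L : ℝ} (hK : 0 ≤ K) (hL : 0 ≤ L)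
    (hf : ∀ x ∈ segment ℝ P Q, ‖f x‖ ≤ K * L) (hF : L * volume.real T ≤ ∫ x in T, F x) :
    Metric.diam T * ∫ x in segment ℝ P Q, f x ∂μH[1] ≤
      K / (Real.pi * ρ ^ 2) * ∫ x in T, F x := by
  set h := Metric.diam T
  have hh₀ : 0 ≤ h := Metric.diam_nonneg
  have hPQh : dist P Q ≤ h := Metric.dist_le_diam_of_mem hT.isBounded
    (hPQ (left_mem_segment ℝ P Q)) (hPQ (right_mem_segment ℝ P Q))
  have hvol : Real.pi * (ρ * h) ^ 2 ≤ volume.real T :=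
    pi_mul_sq_le_volume_real_of_closedBall_subset (by positivity) hz hT.measure_lt_top.ne
  calc h * ∫ x in segment ℝ P Q, f x ∂μH[1]
      ≤ h * (K * L * h) := by
        gcongr
        exact (setIntegral_segment_le_mul_dist hf).trans (by gcongr)
    _ = K / (Real.pi * ρ ^ 2) * (L * (Real.pi * (ρ * h) ^ 2)) := by
        field_simp
    _ ≤ K / (Real.pi * ρ ^ 2) * ∫ x in T, F x := by
        gcongr
        exact (mul_le_mul_of_nonneg_left hvol hL).trans hF

/-- Single-element form of Lemma 5.3: the `β`-weighted normal flux of a local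
immersed finite element function on any edge of an interface triangle is controlled,
up to the factor `α = β_max / β_min`, by its weighted gradient energy over the
element.  The triangle `T = convexHull ℝ {A₁, A₂, A₃}` has diameter `h` and contains
a ball of radius `ρ * h`; `D` and `E` are the interface points on the edges `A₁A₂`
and `A₁A₃`; the chord `DE` splits `T` into `Tm = convexHull ℝ {A₁, D, E}` and
`Tp = convexHull ℝ {A₂, A₃, D, E}`.  The function `v` equals the affine maps
`x ↦ ⟪gm, x⟫ + cm` on `Tm` and `x ↦ ⟪gp, x⟫ + cp` on `Tp` (continuity at `D`, `E`
and the flux jump condition across `DE` hold); `g` is its piecewise-constant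
gradient and `β` the piecewise-constant coefficient.  For every edge
`segment ℝ P Q` of `T` (`P ≠ Q` vertices) with unit normal `ne`:
`h ∫_e β ⟪g, ne⟫² dℋ¹ ≤ C α ∫_T β ‖g‖²`. -/
theorem stmt_8 (ρ : ℝ) (hρ : 0 < ρ) (βp βm : ℝ) (hβp : 0 < βp) (hβm : 0 < βm) :
    ∃ C > (0 : ℝ),
      ∀ A₁ A₂ A₃ : EuclideanSpace ℝ (Fin 2),
        AffineIndependent ℝ ![A₁, A₂, A₃] →
        ∀ T : Set (EuclideanSpace ℝ (Fin 2)), T = convexHull ℝ {A₁, A₂, A₃} →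
        ∀ h : ℝ, h = Metric.diam T →
        (∃ z, Metric.closedBall z (ρ * h) ⊆ T) →
        ∀ s r : ℝ, s ∈ Set.Ioo (0 : ℝ) 1 → r ∈ Set.Ioo (0 : ℝ) 1 →
        ∀ D E : EuclideanSpace ℝ (Fin 2),
          D = (1 - s) • A₁ + s • A₂ →
          E = (1 - r) • A₁ + r • A₃ →
        ∀ Tm Tp : Set (EuclideanSpace ℝ (Fin 2)),
          Tm = convexHull ℝ {A₁, D, E} →
          Tp = convexHull ℝ {A₂, A₃, D, E} →
        ∀ nDE : EuclideanSpace ℝ (Fin 2), ‖nDE‖ = 1 → ⟪E - D, nDE⟫ = 0 →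
        ∀ α : ℝ, α = max βp βm / min βp βm →
        ∀ β : EuclideanSpace ℝ (Fin 2) → ℝ,
          (∀ x ∈ Tm, β x = βm) → (∀ x ∈ Tp \ Tm, β x = βp) →
        ∀ gm gp : EuclideanSpace ℝ (Fin 2), ∀ cm cp : ℝ,
          ⟪gp, D⟫ + cp = ⟪gm, D⟫ + cm →
          ⟪gp, E⟫ + cp = ⟪gm, E⟫ + cm →
          βp * ⟪gp, nDE⟫ = βm * ⟪gm, nDE⟫ →
        ∀ v : EuclideanSpace ℝ (Fin 2) → ℝ,
          (∀ x ∈ Tm, v x = ⟪gm, x⟫ + cm) →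
          (∀ x ∈ Tp, v x = ⟪gp, x⟫ + cp) →
        ∀ g : EuclideanSpace ℝ (Fin 2) → EuclideanSpace ℝ (Fin 2),
          (∀ x ∈ Tm, g x = gm) →
          (∀ x ∈ Tp \ Tm, g x = gp) →
        ∀ P Q : EuclideanSpace ℝ (Fin 2),
          ({P, Q} : Set (EuclideanSpace ℝ (Fin 2))) ⊆ {A₁, A₂, A₃} → P ≠ Q →
        ∀ ne : EuclideanSpace ℝ (Fin 2), ‖ne‖ = 1 → ⟪Q - P, ne⟫ = 0 →
          h * (∫ x in segment ℝ P Q, β x * ⟪g x, ne⟫ ^ 2 ∂μH[1]) ≤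
            C * α * ∫ x in T, β x * ‖g x‖ ^ 2 := by
  refine ⟨(max βp βm / min βp βm) ^ 2 / (Real.pi * ρ ^ 2), by positivity, ?_⟩
  intro A₁ A₂ A₃ hA T hT h rfl ⟨z, hz⟩ s r hs hr D E hD hE Tm Tp hTm hTp nDE hnDE hDEn α rfl
    β hβTm hβTp gm gp cm cp hcD hcE hflux v _ _ g hgTm hgTp P Q hPQ _ ne hne _
  classical
  have : Fact (Module.finrank ℝ (EuclideanSpace ℝ (Fin 2)) = 2) := ⟨finrank_euclideanSpace_fin⟩
  have hTc : IsCompact T := hT ▸ (Set.toFinite _).isCompact_convexHull ℝ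
  have hTmc : IsCompact Tm := hTm ▸ (Set.toFinite _).isCompact_convexHull ℝ
  have hPQT : segment ℝ P Q ⊆ T := (hT ▸ convex_convexHull ℝ _ : Convex ℝ T).segment_subset
    (hT ▸ subset_convexHull ℝ _ (hPQ (by simp))) (hT ▸ subset_convexHull ℝ _ (hPQ (by simp)))
  have hcover : T ⊆ Tm ∪ Tp := hT ▸ hTm ▸ hTp ▸ convexHull_subset_union_of_cut hs.1 hr.1 hD hE
  have hβ := Set.eqOn_piecewise_const_of_subset_union hcover hβTm hβTp
  have hg := Set.eqOn_piecewise_const_of_subset_union hcover hgTm hgTp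
  have hβ₀ : ∀ x ∈ T, 0 ≤ β x := fun x hx ↦ by
    by_cases hxm : x ∈ Tm <;> simp [hβ hx, hxm, hβp.le, hβm.le]
  have henergy : Set.EqOn (fun x ↦ β x * ‖g x‖ ^ 2)
      (Tm.piecewise (fun _ ↦ βm * ‖gm‖ ^ 2) (fun _ ↦ βp * ‖gp‖ ^ 2)) T := fun x hx ↦ by
    by_cases hxm : x ∈ Tm <;> simp [hβ hx, hg hx, hxm]
  have hjump : gp - gm ∈ ℝ ∙ nDE := sub_mem_span_singleton_of_inner_add_eq
    (sub_ne_zero.2 (hD ▸ hE ▸ smul_add_smul_ne_of_affineIndependent hA hs.1.ne'))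
    (norm_ne_zero_iff.1 (hnDE ▸ one_ne_zero)) hDEn hcD hcE
  have hphases := max_mul_norm_sq_le_of_sub_mem_span_of_flux_eq hnDE hβp hβm hjump hflux
  have hupper : ∀ x ∈ T, β x * ‖g x‖ ^ 2 ≤ max (βp * ‖gp‖ ^ 2) (βm * ‖gm‖ ^ 2) := fun x hx ↦ by
    by_cases hxm : x ∈ Tm <;> simp [hβ hx, hg hx, hxm]
  calc Metric.diam T * ∫ x in segment ℝ P Q, β x * ⟪g x, ne⟫ ^ 2 ∂μH[1]
      ≤ (max βp βm / min βp βm) ^ 3 / (Real.pi * ρ ^ 2) * ∫ x in T, β x * ‖g x‖ ^ 2 :=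
        diam_mul_setIntegral_segment_le_of_closedBall_subset hTc hρ hz hPQT (by positivity)
          (by positivity) (fun x hx ↦ (norm_mul_inner_sq_le_mul_norm_sq (hβ₀ x (hPQT hx)) hne _)
            |>.trans ((hupper x (hPQT hx)).trans hphases))
          (mul_measureReal_le_setIntegral_of_eqOn_piecewise hTmc.measurableSet hTc.measurableSet
            hTc.measure_lt_top.ne henergy (min_le_right _ _) (min_le_left _ _))
    _ = _ := by ring
end
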